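/- Let x, t ∈ ℝ and λ ∈ ℂ∖{0}. Then: (1) if t > 0 and x ≥ t, then Re θ21(x,t,λ) > 0 whenever Im λ > 0 and Re θ21(x,t,λ) < 0 whenever Im λ < 0; (2) if t > 0 and x ≤ −t, then Re θ21(x,t,λ) > 0 whenever Im λ < 0 and Re θ21(x,t,λ) < 0 whenever Im λ > 0; (3) if |x| < t and λ0 = √((t−x)/(t+x)), then Re θ21(x,t,λ) > 0 exactly when either (Im λ > 0 and |λ| > λ0) or (Im λ < 0 and |λ| < λ0), Re θ21(x,t,λ) < 0 exactly when either (Im λ > 0 and |λ| < λ0) or (Im λ < 0 and |λ| > λ0), and Re θ21(x,t,λ) = 0 exactly when Im λ = 0 or |λ| = λ0. -/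

import Mathlib

/-- The phase function `θ21(x,t,λ) = (−i√3/2)·[(λ − λ⁻¹)·x + (λ + λ⁻¹)·t]`. -/
noncomputable def θ21 (x t : ℝ) (lam : ℂ) : ℂ :=
  (-Complex.I * (Real.sqrt 3 : ℂ) / 2) *
    ((lam - lam⁻¹) * (x : ℂ) + (lam + lam⁻¹) * (t : ℂ))

lemma re_theta21_eq (x t : ℝ) (lam : ℂ) (hlam : lam ≠ 0) :
    (θ21 x t lam).re
      = (Real.sqrt 3 / 2) * lam.im *
          ((x + t) * Complex.normSq lam + (x - t)) / Complex.normSq lam := by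
  have hn : Complex.normSq lam ≠ 0 := by simpa using hlam
  simp [θ21, Complex.inv_re, Complex.inv_im, Complex.normSq_apply,
    Complex.add_re, Complex.add_im, Complex.mul_re, Complex.mul_im,
    Complex.sub_re, Complex.sub_im, Complex.div_re, Complex.div_im] at *
  have hn2 : lam.re ^ 2 + lam.im ^ 2 ≠ 0 := by intro h; apply hn; linarith
  field_simp
  ring

/-- the signature of `Re θ21` in the three regimes `x ≥ t`, `x ≤ −t`,
and `|x| < t`. -/
theorem re_theta21_sign (x t : ℝ) (lam : ℂ) (hlam : lam ≠ 0) :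
    (0 < t → t ≤ x →
      ((0 < lam.im → 0 < (θ21 x t lam).re) ∧ (lam.im < 0 → (θ21 x t lam).re < 0))) ∧
    (0 < t → x ≤ -t →
      ((lam.im < 0 → 0 < (θ21 x t lam).re) ∧ (0 < lam.im → (θ21 x t lam).re < 0))) ∧
    (|x| < t → ∀ lam0 : ℝ, lam0 = Real.sqrt ((t - x) / (t + x)) →
      ((0 < (θ21 x t lam).re ↔
          (0 < lam.im ∧ lam0 < ‖lam‖) ∨
          (lam.im < 0 ∧ ‖lam‖ < lam0)) ∧
       ((θ21 x t lam).re < 0 ↔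
          (0 < lam.im ∧ ‖lam‖ < lam0) ∨
          (lam.im < 0 ∧ lam0 < ‖lam‖)) ∧
       ((θ21 x t lam).re = 0 ↔ lam.im = 0 ∨ ‖lam‖ = lam0))) := by
  have hn : (0:ℝ) < Complex.normSq lam := Complex.normSq_pos.mpr hlam
  have hs : (0:ℝ) < Real.sqrt 3 := Real.sqrt_pos.mpr (by norm_num)
  have hre := re_theta21_eq x t lam hlam
  set n := Complex.normSq lam with hn'
  refine ⟨?_, ?_, ?_⟩
  · intro ht hx
    have hB : 0 < (x + t) * n + (x - t) := by nlinarith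
    constructor
    · intro him
      rw [hre]
      positivity
    · intro him
      rw [hre]
      have h1 : Real.sqrt 3 / 2 * lam.im < 0 := mul_neg_of_pos_of_neg (by positivity) him
      exact div_neg_of_neg_of_pos (mul_neg_of_neg_of_pos h1 hB) hn
  · intro ht hx
    have hB : (x + t) * n + (x - t) < 0 := by nlinarith
    constructor
    · intro him
      rw [hre]
      have h1 : Real.sqrt 3 / 2 * lam.im < 0 := mul_neg_of_pos_of_neg (by positivity) him
      exact div_pos (mul_pos_of_neg_of_neg h1 hB) hn
    · intro him
      rw [hre]
      have h1 : 0 < Real.sqrt 3 / 2 * lam.im := mul_pos (by positivity) him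
      exact div_neg_of_neg_of_pos (mul_neg_of_pos_of_neg h1 hB) hn
  · intro hx lam0 hlam0
    have hx1 : 0 < t + x := by cases abs_lt.mp hx; linarith
    have hx2 : 0 < t - x := by cases abs_lt.mp hx; linarith
    have hq : (0:ℝ) ≤ (t - x) / (t + x) := by positivity
    have hl0 : 0 ≤ lam0 := hlam0 ▸ Real.sqrt_nonneg _
    have hl0sq : lam0 ^ 2 = (t - x) / (t + x) := by
      rw [hlam0, Real.sq_sqrt hq]
    have habs : (‖lam‖) ^ 2 = n := Complex.sq_norm lam
    have habsnn : 0 ≤ ‖lam‖ := norm_nonneg lam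
    -- bracket identity
    have hBr : (x + t) * n + (x - t) = (x + t) * (n - lam0 ^ 2) := by
      rw [hl0sq]; field_simp; ring
    have hrw : (θ21 x t lam).re
        = (Real.sqrt 3 / 2 * (x + t) / n) * (lam.im * (n - lam0 ^ 2)) := by
      rw [hre, hBr]; field_simp
    have hxt : 0 < x + t := by linarith
    have hK : 0 < Real.sqrt 3 / 2 * (x + t) / n :=
      div_pos (mul_pos (by positivity) hxt) hn
    have hNeg : ∀ a : ℝ, (Real.sqrt 3 / 2 * (x + t) / n * a < 0 ↔ a < 0) := fun a =>
      ⟨fun h => by nlinarith, fun h => mul_neg_of_pos_of_neg hK h⟩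
    have hlt : lam0 < ‖lam‖ ↔ lam0 ^ 2 < n := by
      rw [← habs]
      exact (pow_lt_pow_iff_left₀ hl0 habsnn (by norm_num)).symm
    have hlt' : ‖lam‖ < lam0 ↔ n < lam0 ^ 2 := by
      rw [← habs]
      exact (pow_lt_pow_iff_left₀ habsnn hl0 (by norm_num)).symm
    have heq : ‖lam‖ = lam0 ↔ n = lam0 ^ 2 := by
      rw [← habs]
      constructor
      · rintro rfl; rfl
      · intro h; nlinarith
    refine ⟨?_, ?_, ?_⟩
    · rw [hrw, mul_pos_iff_of_pos_left hK, mul_pos_iff, hlt, hlt']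
      constructor
      · rintro (⟨h1, h2⟩ | ⟨h1, h2⟩)
        · exact Or.inl ⟨h1, by linarith⟩
        · exact Or.inr ⟨h1, by linarith⟩
      · rintro (⟨h1, h2⟩ | ⟨h1, h2⟩)
        · exact Or.inl ⟨h1, by linarith⟩
        · exact Or.inr ⟨h1, by linarith⟩
    · rw [hrw, hNeg _, mul_neg_iff, hlt, hlt']
      constructor
      · rintro (⟨h1, h2⟩ | ⟨h1, h2⟩)
        · exact Or.inl ⟨h1, by linarith⟩
        · exact Or.inr ⟨h1, by linarith⟩
      · rintro (⟨h1, h2⟩ | ⟨h1, h2⟩)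
        · exact Or.inl ⟨h1, by linarith⟩
        · exact Or.inr ⟨h1, by linarith⟩
    · rw [hrw, mul_eq_zero, mul_eq_zero, heq]
      constructor
      · rintro (h | (h | h))
        · exact absurd h (ne_of_gt hK)
        · exact Or.inl h
        · exact Or.inr (by linarith)
      · rintro (h | h)
        · exact Or.inr (Or.inl h)
        · exact Or.inr (Or.inr (by linarith))
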